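/- arXiv:1108.3060 — 3 statements merged into one kernel-verified Lean document; each statement's English description precedes it below -/
import Mathlib

section
/- Let C be a monoidal category, A a category, and (F, u) a commutator functor from C to A. Then for every object X of C, the endomorphism of F(X) given by the composite F(ρ_X⁻¹) ≫ u_{X,𝟙} ≫ F(λ_X) : F(X) → F(X⊗𝟙) → F(𝟙⊗X) → F(X) (where ρ and λ are the right and left unitors) is an idempotent, and hence equals the identity morphism of F(X). -/
/-!
Naturality of `u` along the unitors expresses `u_{X ⊗ 𝟙, 𝟙}`, `u_{𝟙 ⊗ X, 𝟙}` and `u_{X, 𝟙 ⊗ 𝟙}`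
through `v = u_{X, 𝟙}`. Substituting this into the hexagon for `(X, 𝟙, 𝟙)` and simplifying the
structural maps by coherence gives `v = v ≫ F(λ_X ≫ ρ_X⁻¹) ≫ v`, i.e. the endomorphism
`F(ρ_X⁻¹) ≫ v ≫ F(λ_X)` is idempotent. Being an isomorphism, it is the identity.
-/

open CategoryTheory MonoidalCategory

/-- A commutator functor from a monoidal category `C` to a category `A`:
a functor `F : C ⥤ A` equipped with isomorphisms `u X Y : F(X ⊗ Y) ≅ F(Y ⊗ X)`,
natural in `X` and `Y`, satisfying the hexagon compatibility with the associator. -/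
structure CommutatorStruct {C : Type*} [Category C] [MonoidalCategory C]
    {A : Type*} [Category A] (F : C ⥤ A) where
  u : ∀ X Y : C, F.obj (X ⊗ Y) ≅ F.obj (Y ⊗ X)
  naturality : ∀ {X X' Y Y' : C} (f : X ⟶ X') (g : Y ⟶ Y'),
    F.map (f ⊗ₘ g) ≫ (u X' Y').hom = (u X Y).hom ≫ F.map (g ⊗ₘ f)
  hexagon : ∀ X Y Z : C,
    F.map (α_ X Y Z).hom ≫ (u X (Y ⊗ Z)).hom ≫ F.map (α_ Y Z X).hom =
      (u (X ⊗ Y) Z).hom ≫ F.map (α_ Z X Y).inv ≫ (u (Z ⊗ X) Y).hom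

namespace CommutatorStruct

variable {C : Type*} [Category C] [MonoidalCategory C] {A : Type*} [Category A]
  {F : C ⥤ A} (u : CommutatorStruct F)

lemma u_hom_eq_of_iso_left {X X' : C} (e : X ≅ X') (Y : C) :
    (u.u X' Y).hom = F.map (e.inv ▷ Y) ≫ (u.u X Y).hom ≫ F.map (Y ◁ e.hom) := by
  have h := u.naturality e.inv (𝟙 Y)
  simp only [tensorHom_id, id_tensorHom] at h
  rw [reassoc_of% h, ← F.map_comp, ← whiskerLeft_comp, e.inv_hom_id, whiskerLeft_id,
    F.map_id, Category.comp_id]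

lemma u_hom_eq_of_iso_right (X : C) {Y Y' : C} (e : Y ≅ Y') :
    (u.u X Y').hom = F.map (X ◁ e.inv) ≫ (u.u X Y).hom ≫ F.map (e.hom ▷ X) := by
  have h := u.naturality (𝟙 X) e.inv
  simp only [tensorHom_id, id_tensorHom] at h
  rw [reassoc_of% h, ← F.map_comp, ← comp_whiskerRight, e.inv_hom_id, id_whiskerRight,
    F.map_id, Category.comp_id]

lemma u_hom_unit_eq (X : C) :
    (u.u X (𝟙_ C)).hom =
      (u.u X (𝟙_ C)).hom ≫ F.map ((λ_ X).hom ≫ (ρ_ X).inv) ≫ (u.u X (𝟙_ C)).hom := by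
  have h := u.hexagon X (𝟙_ C) (𝟙_ C)
  rw [u.u_hom_eq_of_iso_right X (λ_ (𝟙_ C)).symm, u.u_hom_eq_of_iso_left (ρ_ X).symm,
    u.u_hom_eq_of_iso_left (λ_ X).symm] at h
  simp only [Iso.symm_hom, Iso.symm_inv, Category.assoc, ← F.map_comp_assoc, ← F.map_comp] at h
  have triangle : (α_ X (𝟙_ C) (𝟙_ C)).hom ≫ X ◁ (λ_ (𝟙_ C)).hom = (ρ_ X).hom ▷ 𝟙_ C := by
    monoidal_coherence
  have triangle' : (λ_ (𝟙_ C)).inv ▷ X ≫ (α_ (𝟙_ C) (𝟙_ C) X).hom = 𝟙_ C ◁ (λ_ X).inv := by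
    monoidal_coherence
  have middle : 𝟙_ C ◁ (ρ_ X).inv ≫ (α_ (𝟙_ C) X (𝟙_ C)).inv ≫ (λ_ X).hom ▷ 𝟙_ C =
      (λ_ X).hom ≫ (ρ_ X).inv := by
    monoidal_coherence
  rwa [triangle, triangle', middle, cancel_epi, ← Category.assoc, ← Category.assoc,
    cancel_mono, Category.assoc] at h

def unitIso (X : C) : F.obj X ≅ F.obj X :=
  F.mapIso (ρ_ X).symm ≪≫ u.u X (𝟙_ C) ≪≫ F.mapIso (λ_ X)

lemma unitIso_hom_comp_self (X : C) :
    (u.unitIso X).hom ≫ (u.unitIso X).hom = (u.unitIso X).hom := by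
  conv_rhs => rw [unitIso, Iso.trans_hom, Iso.trans_hom, u.u_hom_unit_eq]
  simp only [unitIso, Iso.trans_hom, Functor.mapIso_hom, Iso.symm_hom, Functor.map_comp,
    Category.assoc]

lemma unitIso_hom_eq_id (X : C) : (u.unitIso X).hom = 𝟙 _ :=
  (cancel_epi ((u.unitIso X).hom)).1 (by rw [unitIso_hom_comp_self, Category.comp_id])

end CommutatorStruct

/-- For a commutator functor `(F, u)`, the endomorphism
`F(ρ_X⁻¹) ≫ u_{X,𝟙} ≫ F(λ_X)` of `F(X)` is idempotent, hence equals the identity. -/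
theorem commutator_right_unit_is_identity
    {C : Type*} [Category C] [MonoidalCategory C] {A : Type*} [Category A]
    (F : C ⥤ A) (u : CommutatorStruct F) (X : C) :
    (F.map (ρ_ X).inv ≫ (u.u X (𝟙_ C)).hom ≫ F.map (λ_ X).hom) ≫
        (F.map (ρ_ X).inv ≫ (u.u X (𝟙_ C)).hom ≫ F.map (λ_ X).hom) =
      F.map (ρ_ X).inv ≫ (u.u X (𝟙_ C)).hom ≫ F.map (λ_ X).hom ∧
    F.map (ρ_ X).inv ≫ (u.u X (𝟙_ C)).hom ≫ F.map (λ_ X).hom = 𝟙 (F.obj X) := by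
  exact ⟨u.unitIso_hom_comp_self X, u.unitIso_hom_eq_id X⟩
end

section
/- Let C be a monoidal category, A a category, and (F, u) a commutator functor from C to A. Then for all objects X, Y of C, the composite u_{X,Y} ≫ u_{Y,X} : F(X⊗Y) → F(Y⊗X) → F(X⊗Y) equals the canonical automorphism of F at X⊗Y, i.e. u_{X,Y} ≫ u_{Y,X} = F(λ_{X⊗Y}⁻¹) ≫ u_{𝟙, X⊗Y} ≫ F(ρ_{X⊗Y}). -/
open CategoryTheory MonoidalCategory

/-!
Apply the hexagon to `(𝟙, X, Y)`. Its left side is the canonical automorphism of `F` at `X ⊗ Y`,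
once `λ_{X⊗Y}` and `ρ_{X⊗Y}` are rewritten through the associator. On its right side, naturality
of `u` moves `λ_X⁻¹ ▷ Y` past `u_{𝟙⊗X, Y}`; the triangle identity turns the result into
`ρ_Y⁻¹ ▷ X`, which naturality moves past `u_{Y⊗𝟙, X}`, where it cancels against `X ◁ ρ_Y`.
-/

namespace CommutatorStruct

variable {C : Type*} [Category C] [MonoidalCategory C] {A : Type*} [Category A]
  {F : C ⥤ A} (u : CommutatorStruct F)

lemma naturality_whiskerRight {X X' : C} (f : X ⟶ X') (Y : C) :
    F.map (f ▷ Y) ≫ (u.u X' Y).hom = (u.u X Y).hom ≫ F.map (Y ◁ f) := by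
  simpa using u.naturality f (𝟙 Y)

lemma hexagon_unit (X Y : C) :
    F.map (λ_ (X ⊗ Y)).inv ≫ (u.u (𝟙_ C) (X ⊗ Y)).hom ≫ F.map (ρ_ (X ⊗ Y)).hom =
      F.map ((λ_ X).inv ▷ Y) ≫ (u.u (𝟙_ C ⊗ X) Y).hom ≫ F.map (α_ Y (𝟙_ C) X).inv ≫
        (u.u (Y ⊗ 𝟙_ C) X).hom ≫ F.map (X ◁ (ρ_ Y).hom) := by
  have hexagon := u.hexagon (𝟙_ C) X Y
  rw [leftUnitor_tensor_inv, rightUnitor_tensor_hom]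
  simp only [Functor.map_comp, Category.assoc]
  rw [reassoc_of% hexagon]

end CommutatorStruct

/-- For a commutator functor `(F, u)`, the composite `u_{X,Y} ≫ u_{Y,X}` equals the
canonical automorphism of `F` at `X ⊗ Y`, namely
`F(λ_{X⊗Y}⁻¹) ≫ u_{𝟙, X⊗Y} ≫ F(ρ_{X⊗Y})`. -/
theorem commutator_double_eq_canonical
    {C : Type*} [Category C] [MonoidalCategory C] {A : Type*} [Category A]
    (F : C ⥤ A) (u : CommutatorStruct F) (X Y : C) :
    (u.u X Y).hom ≫ (u.u Y X).hom =
      F.map (λ_ (X ⊗ Y)).inv ≫ (u.u (𝟙_ C) (X ⊗ Y)).hom ≫ F.map (ρ_ (X ⊗ Y)).hom := by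
  rw [u.hexagon_unit, reassoc_of% u.naturality_whiskerRight, ← F.map_comp_assoc,
    triangle_assoc_comp_left_inv, reassoc_of% u.naturality_whiskerRight,
    ← F.map_comp, ← whiskerLeft_comp]
  simp
end

section
/- Let C be a rigid monoidal category equipped with a pivotal structure, and suppose that the forgetful functor from the Drinfeld center Z(C) to C admits a right adjoint Ind : C ⥤ Z(C). Then Ind carries a commutator structure, namely the one corresponding under the bijection between central structures on left adjoints and commutator structures on right adjoints to the canonical central structure on the forgetful functor Z(C) ⥤ C whose structural isomorphisms are the half-braidings. -/
open CategoryTheory MonoidalCategory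

noncomputable section

/-- A central functor from a category `A` to a monoidal category `C`:
a functor `G : A ⥤ C` equipped with isomorphisms `v a X : G(a) ⊗ X ≅ X ⊗ G(a)`,
natural in `a` and `X`, satisfying the hexagon compatibility with the associator. -/
structure CentralStruct {A : Type*} [Category A] {C : Type*} [Category C]
    [MonoidalCategory C] (G : A ⥤ C) where
  v : ∀ (a : A) (X : C), G.obj a ⊗ X ≅ X ⊗ G.obj a
  naturality : ∀ {a a' : A} {X X' : C} (f : a ⟶ a') (g : X ⟶ X'),
    (G.map f ⊗ₘ g) ≫ (v a' X').hom = (v a X).hom ≫ (g ⊗ₘ G.map f)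
  hexagon : ∀ (a : A) (X Y : C),
    (α_ (G.obj a) X Y).hom ≫ (v a (X ⊗ Y)).hom ≫ (α_ X Y (G.obj a)).hom =
      ((v a X).hom ⊗ₘ 𝟙 Y) ≫ (α_ X (G.obj a) Y).hom ≫ (𝟙 X ⊗ₘ (v a Y).hom)

variable {C : Type*} [Category C] [MonoidalCategory C] [RigidCategory C]

/-- The canonical morphism `ᘁY ⊗ ᘁX ⟶ ᘁ(X ⊗ Y)` in a rigid monoidal category,
obtained from the evaluation morphisms via the duality adjunctions. -/
def dualTensorCompare (X Y : C) : (ᘁY) ⊗ (ᘁX) ⟶ ᘁ(X ⊗ Y) :=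
  (tensorLeftHomEquiv ((ᘁY) ⊗ (ᘁX)) (ᘁ(X ⊗ Y)) (X ⊗ Y) (𝟙_ C)
      ((α_ (X ⊗ Y) (ᘁY) (ᘁX)).inv ≫ ((α_ X Y (ᘁY)).hom ▷ (ᘁX)) ≫
        ((X ◁ ε_ (ᘁY) Y) ▷ (ᘁX)) ≫ ((ρ_ X).hom ▷ (ᘁX)) ≫ ε_ (ᘁX) X)) ≫
    (ρ_ (ᘁ(X ⊗ Y))).hom

/-- The canonical morphism `ᘁ(X ⊗ Y) ⟶ ᘁY ⊗ ᘁX` in a rigid monoidal category. -/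
def dualTensorCompareInv (X Y : C) : (ᘁ(X ⊗ Y) : C) ⟶ (ᘁY) ⊗ (ᘁX) :=
  tensorLeftHomEquiv (ᘁ(X ⊗ Y)) (ᘁY) Y (ᘁX)
    ((tensorLeftHomEquiv (Y ⊗ ᘁ(X ⊗ Y)) (ᘁX) X (𝟙_ C)
        ((α_ X Y (ᘁ(X ⊗ Y))).inv ≫ ε_ (ᘁ(X ⊗ Y)) (X ⊗ Y))) ≫ (ρ_ (ᘁX)).hom)

/-- The canonical tensorator `ᘁᘁX ⊗ ᘁᘁY ⟶ ᘁᘁ(X ⊗ Y)` of the double (left) dual functor. -/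
def doubleDualTensorCompare (X Y : C) : (ᘁ(ᘁX)) ⊗ (ᘁ(ᘁY)) ⟶ ᘁ(ᘁ(X ⊗ Y)) :=
  dualTensorCompare (ᘁY) (ᘁX) ≫ (ᘁ(dualTensorCompareInv X Y))

/-- A pivotal structure on a rigid monoidal category: a monoidal natural isomorphism
between the identity functor and the double (left) dual functor `X ↦ ᘁᘁX`
(compatibility with the unit is automatic for monoidal natural isomorphisms). -/
structure PivotalStruct (C : Type*) [Category C] [MonoidalCategory C] [RigidCategory C] where
  ψ : ∀ X : C, X ≅ ᘁ(ᘁX)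
  naturality : ∀ {X Y : C} (f : X ⟶ Y), f ≫ (ψ Y).hom = (ψ X).hom ≫ (ᘁ(ᘁf))
  tensor : ∀ X Y : C,
    (ψ (X ⊗ Y)).hom = ((ψ X).hom ⊗ₘ (ψ Y).hom) ≫ doubleDualTensorCompare X Y

variable {A : Type*} [Category A]

/-- Given an adjunction `G ⊣ F` with `C` rigid and pivotal, and a central structure `v` on
`G`, the morphism `F(X ⊗ Y) ⟶ F(Y ⊗ X)` obtained by Yoneda from the chain of bijections
`Hom_A(B, F(X⊗Y)) ≅ Hom_C(G B, X⊗Y) ≅ Hom_C(G B ⊗ ᘁY, X) ≅ Hom_C(ᘁY ⊗ G B, X)` (via `v`)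
`≅ Hom_C(G B, ᘁᘁY ⊗ X) ≅ Hom_C(G B, Y ⊗ X)` (via the pivotal structure)
`≅ Hom_A(B, F(Y⊗X))`, i.e. the image of the identity of `F(X ⊗ Y)` under this chain. -/
def commChainHom (ψ : PivotalStruct C) {G : A ⥤ C} {F : C ⥤ A} (adj : G ⊣ F)
    (v : CentralStruct G) (X Y : C) : F.obj (X ⊗ Y) ⟶ F.obj (Y ⊗ X) :=
  (adj.homEquiv (F.obj (X ⊗ Y)) (Y ⊗ X))
    (((tensorLeftHomEquiv (G.obj (F.obj (X ⊗ Y))) (ᘁ(ᘁY)) (ᘁY) X)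
        ((v.v (F.obj (X ⊗ Y)) (ᘁY)).inv ≫
          ((tensorRightHomEquiv (G.obj (F.obj (X ⊗ Y))) (ᘁY) Y X).symm
            ((adj.homEquiv (F.obj (X ⊗ Y)) (X ⊗ Y)).symm (𝟙 (F.obj (X ⊗ Y))))))) ≫
      ((ψ.ψ Y).inv ⊗ₘ 𝟙 X))

/-- Given an adjunction `G ⊣ F` with `C` rigid and pivotal, and a commutator structure `u` on
`F`, the morphism `G(a) ⊗ X ⟶ X ⊗ G(a)` obtained by Yoneda from the chain of bijections
`Hom_C(G a ⊗ X, W) ≅ Hom_C(G a, W ⊗ ᘁX) ≅ Hom_A(a, F(W ⊗ ᘁX)) ≅ Hom_A(a, F(ᘁX ⊗ W))`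
(via `u`) `≅ Hom_C(G a, ᘁX ⊗ W) ≅ Hom_C(X ⊗ G a, W)`, i.e. the image of the identity of
`X ⊗ G(a)` under the inverse chain. -/
def centralChainHom (ψ : PivotalStruct C) {G : A ⥤ C} {F : C ⥤ A} (adj : G ⊣ F)
    (u : CommutatorStruct F) (a : A) (X : C) : G.obj a ⊗ X ⟶ X ⊗ G.obj a :=
  (𝟙 (G.obj a) ⊗ₘ (ψ.ψ X).hom) ≫
    (tensorRightHomEquiv (G.obj a) (ᘁ(ᘁX)) (ᘁX) (X ⊗ G.obj a)).symm
      ((adj.homEquiv a ((X ⊗ G.obj a) ⊗ (ᘁX))).symm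
        (((adj.homEquiv a ((ᘁX) ⊗ (X ⊗ G.obj a)))
            ((tensorLeftHomEquiv (G.obj a) (ᘁX) X (X ⊗ G.obj a)) (𝟙 (X ⊗ G.obj a)))) ≫
          (u.u (ᘁX) (X ⊗ G.obj a)).hom))

/-- The canonical central structure on the forgetful functor from the Drinfeld center,
whose structural isomorphisms are the half-braidings. -/
def forgetCentral : CentralStruct (Center.forget C) where
  v a X := a.2.β X
  naturality {a a' X X'} f g := by
    change (f.f ⊗ₘ g) ≫ (a'.2.β X').hom = (a.2.β X).hom ≫ (g ⊗ₘ f.f)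
    rw [MonoidalCategory.tensorHom_def, Category.assoc, HalfBraiding.naturality,
      ← Category.assoc, Center.Hom.comm, Category.assoc, MonoidalCategory.tensorHom_def' g f.f]
  hexagon a X Y := by
    simp [MonoidalCategory.tensorHom_def, tensorHom_def', HalfBraiding.monoidal, Center.forget]

/-! Through the adjunction, a morphism `B ⟶ Ind (X ⊗ Y)` is a morphism `k : G B ⟶ X ⊗ Y` out of
a central object. Bending the `Y` strand of `k` down with the evaluation, carrying it across `G B`
with the inverse half-braiding and bending it back up with the pivotal coevaluation
`𝟙 ⟶ Y ⊗ ᘁY` rotates `k` into a morphism `G B ⟶ Y ⊗ X`. This rotation is a bijection natural in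
`B`, so by Yoneda it is postcomposition with an isomorphism `Ind (X ⊗ Y) ≅ Ind (Y ⊗ X)`, namely the
chain morphism. Naturality in `X` and `Y` amounts to sliding morphisms along strands; the hexagon
comes from the hexagon of the half-braiding together with the monoidality of the pivotal
structure, which makes the pivotal coevaluation of `Y ⊗ Z` the nested one of `Y` and `Z`. -/

section

variable {C : Type*} [Category C] [MonoidalCategory C]

lemma tensorLeftHomEquiv_whiskerLeft_comp {X X' Y Y' Z : C} [ExactPairing Y Y'] (f : X ⟶ X')
    (g : Y' ⊗ X' ⟶ Z) :
    tensorLeftHomEquiv X Y Y' Z (Y' ◁ f ≫ g) = f ≫ tensorLeftHomEquiv X' Y Y' Z g := by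
  rw [← Equiv.eq_symm_apply, tensorLeftHomEquiv_symm_naturality, Equiv.symm_apply_apply]

namespace CommutatorStruct

variable {G : A ⥤ C} {F : C ⥤ A}

def ofHomEquiv (adj : G ⊣ F) (e : ∀ (B : A) (X Y : C), (G.obj B ⟶ X ⊗ Y) ≃ (G.obj B ⟶ Y ⊗ X))
    (e_map : ∀ {B B' : A} (h : B' ⟶ B) (X Y : C) (k : G.obj B ⟶ X ⊗ Y),
      e B' X Y (G.map h ≫ k) = G.map h ≫ e B X Y k)
    (e_tensorHom : ∀ (B : A) {X X' Y Y' : C} (k : G.obj B ⟶ X ⊗ Y) (f : X ⟶ X') (g : Y ⟶ Y'),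
      e B X' Y' (k ≫ (f ⊗ₘ g)) = e B X Y k ≫ (g ⊗ₘ f))
    (e_hexagon : ∀ (B : A) (X Y Z : C) (k : G.obj B ⟶ (X ⊗ Y) ⊗ Z),
      e B X (Y ⊗ Z) (k ≫ (α_ X Y Z).hom) ≫ (α_ Y Z X).hom =
        e B (Z ⊗ X) Y (e B (X ⊗ Y) Z k ≫ (α_ Z X Y).inv)) :
    CommutatorStruct F :=
  let E (B : A) (X Y : C) : (B ⟶ F.obj (X ⊗ Y)) ≃ (B ⟶ F.obj (Y ⊗ X)) :=
    (adj.homEquiv B _).symm.trans ((e B X Y).trans (adj.homEquiv B _))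
  have E_comp {B B' : A} (h : B' ⟶ B) (X Y : C) (f : B ⟶ F.obj (X ⊗ Y)) :
      E B' X Y (h ≫ f) = h ≫ E B X Y f := by
    simp [E, Adjunction.homEquiv_naturality_left_symm, e_map, Adjunction.homEquiv_naturality_left]
  have comp_E_id {B : A} {X Y : C} (f : B ⟶ F.obj (X ⊗ Y)) :
      f ≫ E _ X Y (𝟙 _) = E B X Y f := by rw [← E_comp, Category.comp_id]
  { u X Y := Yoneda.ext _ _ (E _ X Y) (E _ X Y).symm (by simp) (by simp) (E_comp · X Y)
    naturality f g := by
      change _ ≫ E _ _ _ (𝟙 _) = E _ _ _ (𝟙 _) ≫ _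
      rw [comp_E_id]
      simp only [E, Equiv.trans_apply, ← Adjunction.homEquiv_naturality_right, ← e_tensorHom,
        ← Adjunction.homEquiv_naturality_right_symm, Category.id_comp]
    hexagon X Y Z := by
      change F.map _ ≫ E _ _ _ (𝟙 _) ≫ _ = E _ _ _ (𝟙 _) ≫ _ ≫ E _ _ _ (𝟙 _)
      rw [← Category.assoc, comp_E_id, ← Category.assoc, comp_E_id]
      simp only [E, Equiv.trans_apply, ← Adjunction.homEquiv_naturality_right,
        Equiv.symm_apply_apply]
      rw [← Category.id_comp (F.map _), Adjunction.homEquiv_naturality_right_symm, e_hexagon] }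

end CommutatorStruct

namespace CentralStruct

variable {G : A ⥤ C} (v : CentralStruct G)

lemma v_inv_naturality (a : A) {X Y : C} (g : X ⟶ Y) :
    g ▷ G.obj a ≫ (v.v a Y).inv = (v.v a X).inv ≫ G.obj a ◁ g := by
  have h := v.naturality (𝟙 a) g
  rw [G.map_id, id_tensorHom] at h
  rw [Iso.comp_inv_eq, Category.assoc, h, Iso.inv_hom_id_assoc, tensorHom_id]

lemma v_inv_naturality_map {a a' : A} (h : a ⟶ a') (X : C) :
    (v.v a X).inv ≫ G.map h ▷ X = X ◁ G.map h ≫ (v.v a' X).inv := by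
  have h := v.naturality h (𝟙 X)
  rw [tensorHom_id, id_tensorHom] at h
  rw [Iso.inv_comp_eq, ← Category.assoc, ← h, Category.assoc, Iso.hom_inv_id, Category.comp_id]

lemma v_inv_tensor (a : A) (X Y : C) :
    (v.v a (X ⊗ Y)).inv =
      (α_ X Y (G.obj a)).hom ≫ X ◁ (v.v a Y).inv ≫ (α_ X (G.obj a) Y).inv ≫
        (v.v a X).inv ▷ Y ≫ (α_ (G.obj a) X Y).hom := by
  have h : (v.v a (X ⊗ Y)).hom ≫ (α_ X Y (G.obj a)).hom =
      (α_ _ _ _).inv ≫ (v.v a X).hom ▷ Y ≫ (α_ _ _ _).hom ≫ X ◁ (v.v a Y).hom := by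
    rw [← id_tensorHom, ← tensorHom_id, ← v.hexagon, Iso.inv_hom_id_assoc]
  rw [← cancel_epi (v.v a (X ⊗ Y)).hom, Iso.hom_inv_id, reassoc_of% h]
  simp

end CentralStruct

end

section Duality

lemma eq_of_whiskerLeft_comp_evaluation_eq {Z M : C} {f g : M ⟶ ᘁZ}
    (h : Z ◁ f ≫ ε_ (ᘁZ) Z = Z ◁ g ≫ ε_ (ᘁZ) Z) : f = g := by
  have h' := congrArg (tensorLeftHomEquiv M (ᘁZ) Z (𝟙_ C)) h
  simpa only [tensorLeftHomEquiv_whiskerLeft_comp_evaluation, cancel_mono] using h'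

lemma coevaluation_comp_whiskerRight_of_evaluation {P Z : C} [ExactPairing P Z] (g : (ᘁZ : C) ⟶ P)
    (hg : Z ◁ g ≫ ε_ P Z = ε_ (ᘁZ) Z) : η_ (ᘁZ) Z ≫ g ▷ Z = η_ P Z := by
  apply (tensorRightHomEquiv (𝟙_ C) (ᘁZ) Z P).symm.injective
  rw [tensorRightHomEquiv_symm_coevaluation_comp_whiskerRight]
  symm
  calc (tensorRightHomEquiv (𝟙_ C) (ᘁZ) Z P).symm (η_ P Z)
      = (η_ P Z ▷ (ᘁZ) ≫ (P ⊗ Z) ◁ g) ⊗≫ P ◁ ε_ P Z ⊗≫ 𝟙 _ := by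
        simp only [tensorRightHomEquiv, Equiv.coe_fn_symm_mk, ← hg]; monoidal
    _ = 𝟙 _ ⊗≫ g ⊗≫ (η_ P Z ▷ P ⊗≫ P ◁ ε_ P Z) ⊗≫ 𝟙 _ := by
        rw [← whisker_exchange]; monoidal
    _ = (λ_ (ᘁZ)).hom ≫ g := by rw [ExactPairing.evaluation_coevaluation'']; monoidal

lemma whiskerLeft_dualTensorCompare_comp_evaluation (X Y : C) :
    (X ⊗ Y) ◁ dualTensorCompare X Y ≫ ε_ (ᘁ(X ⊗ Y)) (X ⊗ Y) = ε_ ((ᘁY) ⊗ (ᘁX)) (X ⊗ Y) := by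
  apply (tensorLeftHomEquiv ((ᘁY) ⊗ (ᘁX)) (ᘁ(X ⊗ Y)) (X ⊗ Y) (𝟙_ C)).injective
  rw [tensorLeftHomEquiv_whiskerLeft_comp_evaluation, ExactPairing.tensor_evaluation]
  simp only [dualTensorCompare, Category.assoc, Iso.hom_inv_id, Category.comp_id]
  congr 1
  monoidal

lemma whiskerLeft_dualTensorCompareInv_comp_evaluation (X Y : C) :
    (X ⊗ Y) ◁ dualTensorCompareInv X Y ≫ ε_ ((ᘁY) ⊗ (ᘁX)) (X ⊗ Y) = ε_ (ᘁ(X ⊗ Y)) (X ⊗ Y) := by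
  have hmate : X ◁ (tensorLeftHomEquiv _ (ᘁY) Y (ᘁX)).symm (dualTensorCompareInv X Y) ≫
      ε_ (ᘁX) X = (α_ X Y (ᘁ(X ⊗ Y))).inv ≫ ε_ (ᘁ(X ⊗ Y)) (X ⊗ Y) := by
    rw [dualTensorCompareInv, Equiv.symm_apply_apply]
    apply (tensorLeftHomEquiv _ (ᘁX) X (𝟙_ C)).injective
    rw [tensorLeftHomEquiv_whiskerLeft_comp_evaluation, Category.assoc, Iso.hom_inv_id,
      Category.comp_id]
  calc (X ⊗ Y) ◁ dualTensorCompareInv X Y ≫ ε_ ((ᘁY) ⊗ (ᘁX)) (X ⊗ Y)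
      = (α_ X Y _).hom ≫ X ◁ (tensorLeftHomEquiv _ (ᘁY) Y (ᘁX)).symm (dualTensorCompareInv X Y) ≫
          ε_ (ᘁX) X := by
        simp only [ExactPairing.tensor_evaluation, tensorLeftHomEquiv, Equiv.coe_fn_symm_mk]
        monoidal
    _ = ε_ (ᘁ(X ⊗ Y)) (X ⊗ Y) := by rw [hmate, Iso.hom_inv_id_assoc]

lemma dualTensorCompareInv_comp_dualTensorCompare (X Y : C) :
    dualTensorCompareInv X Y ≫ dualTensorCompare X Y = 𝟙 (ᘁ(X ⊗ Y)) :=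
  eq_of_whiskerLeft_comp_evaluation_eq <| by
    rw [MonoidalCategory.whiskerLeft_comp, Category.assoc,
      whiskerLeft_dualTensorCompare_comp_evaluation,
      whiskerLeft_dualTensorCompareInv_comp_evaluation, MonoidalCategory.whiskerLeft_id,
      Category.id_comp]

lemma coevaluation_comp_dualTensorCompareInv (X Y : C) :
    η_ (ᘁ(X ⊗ Y)) (X ⊗ Y) ≫ dualTensorCompareInv X Y ▷ (X ⊗ Y) = η_ ((ᘁY) ⊗ (ᘁX)) (X ⊗ Y) :=
  coevaluation_comp_whiskerRight_of_evaluation _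
    (whiskerLeft_dualTensorCompareInv_comp_evaluation X Y)

end Duality

namespace PivotalStruct

variable (ψ : PivotalStruct C)

def coevaluation (X : C) : 𝟙_ C ⟶ X ⊗ ᘁX :=
  η_ (ᘁ(ᘁX)) (ᘁX) ≫ (ψ.ψ X).inv ▷ (ᘁX)

lemma coevaluation_naturality {X Y : C} (f : X ⟶ Y) :
    ψ.coevaluation Y ≫ Y ◁ (ᘁf) = ψ.coevaluation X ≫ f ▷ (ᘁX) := by
  have hf : (ᘁ(ᘁf)) ≫ (ψ.ψ Y).inv = (ψ.ψ X).inv ≫ f := by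
    rw [Iso.comp_inv_eq, Category.assoc, ψ.naturality f, Iso.inv_hom_id_assoc]
  rw [coevaluation, Category.assoc, ← whisker_exchange, ← coevaluation_comp_leftAdjointMate_assoc,
    ← comp_whiskerRight, hf, comp_whiskerRight, coevaluation, Category.assoc]

lemma leftAdjointMate_dualTensorCompareInv_comp_inv (X Y : C) :
    (ᘁ(dualTensorCompareInv X Y)) ≫ (ψ.ψ (X ⊗ Y)).inv =
      dualTensorCompareInv (ᘁY) (ᘁX) ≫ ((ψ.ψ X).inv ⊗ₘ (ψ.ψ Y).inv) := by
  rw [Iso.comp_inv_eq, ψ.tensor, doubleDualTensorCompare, Category.assoc,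
    tensorHom_comp_tensorHom_assoc, Iso.inv_hom_id, Iso.inv_hom_id, id_tensorHom_id,
    Category.id_comp, reassoc_of% dualTensorCompareInv_comp_dualTensorCompare]

lemma coevaluation_tensor (X Y : C) :
    ψ.coevaluation (X ⊗ Y) ≫ (X ⊗ Y) ◁ dualTensorCompareInv X Y =
      ψ.coevaluation X ⊗≫ X ◁ ψ.coevaluation Y ▷ (ᘁX) ⊗≫ 𝟙 _ := by
  rw [coevaluation, Category.assoc, ← whisker_exchange, ← coevaluation_comp_leftAdjointMate_assoc,
    ← comp_whiskerRight, leftAdjointMate_dualTensorCompareInv_comp_inv, comp_whiskerRight,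
    reassoc_of% coevaluation_comp_dualTensorCompareInv, ExactPairing.tensor_coevaluation]
  calc _ = η_ (ᘁ(ᘁX)) (ᘁX) ⊗≫
        ((ᘁ(ᘁX)) ◁ η_ (ᘁ(ᘁY)) (ᘁY) ≫ (ψ.ψ X).inv ▷ ((ᘁ(ᘁY)) ⊗ (ᘁY))) ▷ (ᘁX) ⊗≫
          X ◁ ((ψ.ψ Y).inv ▷ (ᘁY)) ▷ (ᘁX) ⊗≫ 𝟙 _ := by
        rw [MonoidalCategory.tensorHom_def]; monoidal
    _ = _ := by rw [whisker_exchange, coevaluation, coevaluation]; monoidal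

end PivotalStruct

namespace CentralStruct

variable {G : A ⥤ C} (ψ : PivotalStruct C) (v : CentralStruct G)

def homEquivSwap (B : A) (X Y : C) : (G.obj B ⟶ X ⊗ Y) ≃ (G.obj B ⟶ Y ⊗ X) where
  toFun k := tensorLeftHomEquiv _ (ᘁ(ᘁY)) (ᘁY) X
      ((v.v B (ᘁY)).inv ≫ (tensorRightHomEquiv _ (ᘁY) Y X).symm k) ≫ ((ψ.ψ Y).inv ⊗ₘ 𝟙 X)
  invFun k := tensorRightHomEquiv _ (ᘁY) Y X
      ((v.v B (ᘁY)).hom ≫ (tensorLeftHomEquiv _ (ᘁ(ᘁY)) (ᘁY) X).symm (k ≫ ((ψ.ψ Y).hom ⊗ₘ 𝟙 X)))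
  left_inv k := by simp
  right_inv k := by simp

lemma homEquivSwap_apply (B : A) (X Y : C) (k : G.obj B ⟶ X ⊗ Y) :
    v.homEquivSwap ψ B X Y k = 𝟙 _ ⊗≫ ψ.coevaluation Y ▷ G.obj B ⊗≫ Y ◁ (v.v B (ᘁY)).inv ⊗≫
      Y ◁ k ▷ (ᘁY) ⊗≫ Y ◁ X ◁ ε_ (ᘁY) Y ⊗≫ 𝟙 _ := by
  simp only [homEquivSwap, Equiv.coe_fn_mk, tensorLeftHomEquiv, tensorRightHomEquiv,
    Equiv.coe_fn_symm_mk, PivotalStruct.coevaluation]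
  rw [tensorHom_id, Category.assoc, Category.assoc, Category.assoc, whisker_exchange]
  monoidal

lemma homEquivSwap_map {B B' : A} (h : B' ⟶ B) (X Y : C) (k : G.obj B ⟶ X ⊗ Y) :
    v.homEquivSwap ψ B' X Y (G.map h ≫ k) = G.map h ≫ v.homEquivSwap ψ B X Y k := by
  simp only [homEquivSwap, Equiv.coe_fn_mk, tensorRightHomEquiv_symm_naturality,
    reassoc_of% v.v_inv_naturality_map, tensorLeftHomEquiv_whiskerLeft_comp, Category.assoc]

lemma homEquivSwap_whiskerRight (B : A) {X X' : C} (Y : C) (k : G.obj B ⟶ X ⊗ Y) (f : X ⟶ X') :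
    v.homEquivSwap ψ B X' Y (k ≫ f ▷ Y) = v.homEquivSwap ψ B X Y k ≫ Y ◁ f :=
  calc _ = 𝟙 _ ⊗≫ ψ.coevaluation Y ▷ G.obj B ⊗≫ Y ◁ (v.v B (ᘁY)).inv ⊗≫ Y ◁ k ▷ (ᘁY) ⊗≫
        Y ◁ (f ▷ (Y ⊗ ᘁY) ≫ X' ◁ ε_ (ᘁY) Y) ⊗≫ 𝟙 _ := by
        rw [homEquivSwap_apply]; monoidal
    _ = _ := by rw [← whisker_exchange, homEquivSwap_apply]; monoidal

lemma homEquivSwap_whiskerLeft (B : A) (X : C) {Y Y' : C} (k : G.obj B ⟶ X ⊗ Y) (g : Y ⟶ Y') :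
    v.homEquivSwap ψ B X Y' (k ≫ X ◁ g) = v.homEquivSwap ψ B X Y k ≫ g ▷ X :=
  calc _ = 𝟙 _ ⊗≫ ψ.coevaluation Y' ▷ G.obj B ⊗≫ Y' ◁ (v.v B (ᘁY')).inv ⊗≫
        Y' ◁ k ▷ (ᘁY') ⊗≫ Y' ◁ X ◁ (g ▷ (ᘁY') ≫ ε_ (ᘁY') Y') ⊗≫ 𝟙 _ := by
        rw [homEquivSwap_apply]; monoidal
    _ = 𝟙 _ ⊗≫ ψ.coevaluation Y' ▷ G.obj B ⊗≫ Y' ◁ (v.v B (ᘁY')).inv ⊗≫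
        Y' ◁ (k ▷ (ᘁY') ≫ (X ⊗ Y) ◁ (ᘁg)) ⊗≫ Y' ◁ X ◁ ε_ (ᘁY) Y ⊗≫ 𝟙 _ := by
        rw [← leftAdjointMate_comp_evaluation]; monoidal
    _ = 𝟙 _ ⊗≫ ψ.coevaluation Y' ▷ G.obj B ⊗≫
        Y' ◁ ((v.v B (ᘁY')).inv ≫ G.obj B ◁ (ᘁg)) ⊗≫
        Y' ◁ k ▷ (ᘁY) ⊗≫ Y' ◁ X ◁ ε_ (ᘁY) Y ⊗≫ 𝟙 _ := by
        rw [← whisker_exchange]; monoidal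
    _ = 𝟙 _ ⊗≫ (ψ.coevaluation Y' ≫ Y' ◁ (ᘁg : (ᘁY' : C) ⟶ ᘁY)) ▷ G.obj B ⊗≫
        Y' ◁ (v.v B (ᘁY)).inv ⊗≫
        Y' ◁ k ▷ (ᘁY) ⊗≫ Y' ◁ X ◁ ε_ (ᘁY) Y ⊗≫ 𝟙 _ := by
        rw [← v_inv_naturality]; monoidal
    _ = 𝟙 _ ⊗≫ ψ.coevaluation Y ▷ G.obj B ⊗≫ (g ▷ ((ᘁY) ⊗ G.obj B) ≫
        Y' ◁ ((v.v B (ᘁY)).inv ⊗≫ k ▷ (ᘁY) ⊗≫ X ◁ ε_ (ᘁY) Y ⊗≫ 𝟙 X)) ⊗≫ 𝟙 _ := by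
        rw [PivotalStruct.coevaluation_naturality]; monoidal
    _ = _ := by rw [← whisker_exchange, homEquivSwap_apply]; monoidal

lemma homEquivSwap_tensorHom (B : A) {X X' Y Y' : C} (k : G.obj B ⟶ X ⊗ Y) (f : X ⟶ X')
    (g : Y ⟶ Y') :
    v.homEquivSwap ψ B X' Y' (k ≫ (f ⊗ₘ g)) = v.homEquivSwap ψ B X Y k ≫ (g ⊗ₘ f) := by
  rw [MonoidalCategory.tensorHom_def, ← Category.assoc, homEquivSwap_whiskerLeft,
    homEquivSwap_whiskerRight, Category.assoc, ← tensorHom_def']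

lemma homEquivSwap_hexagon (B : A) (X Y Z : C) (k : G.obj B ⟶ (X ⊗ Y) ⊗ Z) :
    v.homEquivSwap ψ B X (Y ⊗ Z) (k ≫ (α_ X Y Z).hom) ≫ (α_ Y Z X).hom =
      v.homEquivSwap ψ B (Z ⊗ X) Y (v.homEquivSwap ψ B (X ⊗ Y) Z k ≫ (α_ Z X Y).inv) :=
  calc _ = 𝟙 _ ⊗≫ ψ.coevaluation (Y ⊗ Z) ▷ G.obj B ⊗≫
        (Y ⊗ Z) ◁ ((dualTensorCompareInv Y Z ≫ dualTensorCompare Y Z) ▷ G.obj B ≫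
          (v.v B (ᘁ(Y ⊗ Z))).inv) ⊗≫
        (Y ⊗ Z) ◁ (k ≫ (α_ X Y Z).hom) ▷ (ᘁ(Y ⊗ Z)) ⊗≫
        (Y ⊗ Z) ◁ X ◁ ε_ (ᘁ(Y ⊗ Z)) (Y ⊗ Z) ⊗≫ 𝟙 _ := by
        rw [dualTensorCompareInv_comp_dualTensorCompare, homEquivSwap_apply]; monoidal
    _ = 𝟙 _ ⊗≫ (ψ.coevaluation (Y ⊗ Z) ≫ (Y ⊗ Z) ◁ dualTensorCompareInv Y Z) ▷ G.obj B ⊗≫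
        (Y ⊗ Z) ◁ (v.v B ((ᘁZ) ⊗ (ᘁY))).inv ⊗≫
        (Y ⊗ Z) ◁ (G.obj B ◁ dualTensorCompare Y Z ≫ (k ≫ (α_ X Y Z).hom) ▷ (ᘁ(Y ⊗ Z))) ⊗≫
        (Y ⊗ Z) ◁ X ◁ ε_ (ᘁ(Y ⊗ Z)) (Y ⊗ Z) ⊗≫ 𝟙 _ := by
        rw [comp_whiskerRight, Category.assoc, v_inv_naturality]; monoidal
    _ = 𝟙 _ ⊗≫ (ψ.coevaluation (Y ⊗ Z) ≫ (Y ⊗ Z) ◁ dualTensorCompareInv Y Z) ▷ G.obj B ⊗≫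
        (Y ⊗ Z) ◁ (v.v B ((ᘁZ) ⊗ (ᘁY))).inv ⊗≫
        (Y ⊗ Z) ◁ (k ≫ (α_ X Y Z).hom) ▷ ((ᘁZ) ⊗ (ᘁY)) ⊗≫
        (Y ⊗ Z) ◁ X ◁ ((Y ⊗ Z) ◁ dualTensorCompare Y Z ≫ ε_ (ᘁ(Y ⊗ Z)) (Y ⊗ Z)) ⊗≫ 𝟙 _ := by
        rw [whisker_exchange]; monoidal
    _ = 𝟙 _ ⊗≫
        (ψ.coevaluation Y ⊗≫ Y ◁ ψ.coevaluation Z ▷ (ᘁY) ⊗≫ 𝟙 ((Y ⊗ Z) ⊗ (ᘁZ) ⊗ (ᘁY))) ▷ G.obj B ⊗≫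
        (Y ⊗ Z) ◁ ((α_ _ _ _).hom ≫ (ᘁZ : C) ◁ (v.v B (ᘁY)).inv ≫ (α_ _ _ _).inv ≫
          (v.v B (ᘁZ)).inv ▷ (ᘁY) ≫ (α_ _ _ _).hom) ⊗≫
        (Y ⊗ Z) ◁ (k ≫ (α_ X Y Z).hom) ▷ ((ᘁZ) ⊗ (ᘁY)) ⊗≫
        (Y ⊗ Z) ◁ X ◁
          (𝟙 ((Y ⊗ Z) ⊗ (ᘁZ) ⊗ (ᘁY)) ⊗≫ Y ◁ (ε_ (ᘁZ) Z ▷ (ᘁY)) ⊗≫ ε_ (ᘁY) Y) ⊗≫ 𝟙 _ := by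
        rw [PivotalStruct.coevaluation_tensor, v_inv_tensor,
          whiskerLeft_dualTensorCompare_comp_evaluation, ExactPairing.tensor_evaluation]
    _ = 𝟙 _ ⊗≫ ψ.coevaluation Y ▷ G.obj B ⊗≫
        Y ◁ (ψ.coevaluation Z ▷ ((ᘁY) ⊗ G.obj B) ≫ (Z ⊗ (ᘁZ)) ◁ (v.v B (ᘁY)).inv) ⊗≫
        Y ◁ Z ◁ (v.v B (ᘁZ)).inv ▷ (ᘁY) ⊗≫ Y ◁ Z ◁ k ▷ ((ᘁZ) ⊗ (ᘁY)) ⊗≫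
        Y ◁ Z ◁ X ◁ Y ◁ ε_ (ᘁZ) Z ▷ (ᘁY) ⊗≫ Y ◁ Z ◁ X ◁ ε_ (ᘁY) Y ⊗≫ 𝟙 _ := by
        monoidal
    _ = _ := by
        rw [← whisker_exchange, homEquivSwap_apply, homEquivSwap_apply]; monoidal

end CentralStruct

def commutatorOfCentral {G : A ⥤ C} {F : C ⥤ A} (ψ : PivotalStruct C) (adj : G ⊣ F)
    (v : CentralStruct G) : CommutatorStruct F :=
  CommutatorStruct.ofHomEquiv adj (v.homEquivSwap ψ) (v.homEquivSwap_map ψ)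
    (v.homEquivSwap_tensorHom ψ) (v.homEquivSwap_hexagon ψ)

lemma commutatorOfCentral_u_hom {G : A ⥤ C} {F : C ⥤ A} (ψ : PivotalStruct C) (adj : G ⊣ F)
    (v : CentralStruct G) (X Y : C) :
    ((commutatorOfCentral ψ adj v).u X Y).hom = commChainHom ψ adj v X Y :=
  rfl

/-- If `C` is rigid and pivotal and the forgetful functor from the Drinfeld center admits a
right adjoint `Ind : C ⥤ Z(C)`, then `Ind` carries a commutator structure, namely the one
corresponding (under the bijection between central structures on left adjoints and commutator
structures on right adjoints) to the canonical central structure on the forgetful functor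
given by the half-braidings. -/
theorem ind_commutator (ψ : PivotalStruct C) (Ind : C ⥤ CategoryTheory.Center C)
    (adj : Center.forget C ⊣ Ind) :
    ∃ u : CommutatorStruct Ind,
      ∀ X Y : C, (u.u X Y).hom = commChainHom ψ adj forgetCentral X Y :=
  ⟨commutatorOfCentral ψ adj forgetCentral, commutatorOfCentral_u_hom ψ adj forgetCentral⟩

end
end
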